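/- arXiv:2510.25398 — 2 statements merged into one kernel-verified Lean document; each statement's English description precedes it below -/
import Mathlib

section
/- For every x ∈ ℝⁿ₊ with x ≠ 0, the function Y(t) := ⟨e,x⟩⁻¹ · exp(t(D+Bᵀ)) x converges, as t → ∞, to ζ/⟨e,ζ⟩. -/
open Matrix Finset Filter

/-- The diagonal matrix of outflows: `D i i = -∑_{j ≠ i} B i j`. -/
noncomputable def Dmat {n : ℕ} (B : Matrix (Fin n) (Fin n) ℝ) : Matrix (Fin n) (Fin n) ℝ :=
  Matrix.diagonal fun i => -∑ j ∈ Finset.univ.erase i, B i j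

/-- Strong connectivity of the directed graph with an edge `i → j` whenever `B i j > 0`. -/
def StronglyConnected {n : ℕ} (B : Matrix (Fin n) (Fin n) ℝ) : Prop :=
  ∀ i j : Fin n, Relation.ReflTransGen (fun a b => 0 < B a b) i j

/-!
The matrix `A = (D + B)ᵀ` is Metzler and its columns sum to zero, so every `exp (t • A)` with
`t ≥ 0` is column-stochastic. Shifting `A` by a multiple of the identity makes it entrywise
nonnegative without changing `exp (t • A)` beyond a positive scalar, and strong connectivity then
makes some power of the shifted matrix, hence its exponential, positive in every entry. A positive
column-stochastic matrix contracts the `ℓ¹` norm on vectors of zero sum, so `exp (t • A) w → 0`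
for such `w`. Writing `x = (⟨e,x⟩ / ⟨e,ζ⟩) ζ + w` with `⟨e,w⟩ = 0` and using `exp (t • A) ζ = ζ`
gives the limit.
-/

open NormedSpace
open scoped Nat Topology

theorem NormedSpace.exp_mul_eq_self_of_mul_eq_zero {𝔸 : Type*} [NormedRing 𝔸]
    [NormedAlgebra ℝ 𝔸] [CompleteSpace 𝔸] {a b : 𝔸} (h : a * b = 0) : exp a * b = b := by
  have hterm : ∀ k ≠ 0, ((k ! : ℝ)⁻¹ • a ^ k) * b = 0 := fun k hk => by
    obtain ⟨k, rfl⟩ := Nat.exists_eq_succ_of_ne_zero hk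
    rw [smul_mul_assoc, pow_succ, mul_assoc, h, mul_zero, smul_zero]
  refine ((exp_series_hasSum_exp' (𝕂 := ℝ) a).mul_right b).unique ?_
  simpa using hasSum_single 0 hterm

theorem pi_norm_le_sum_abs {ι : Type*} [Fintype ι] (u : ι → ℝ) : ‖u‖ ≤ ∑ i, |u i| :=
  (pi_norm_le_iff_of_nonneg (by positivity)).2 fun i =>
    (Real.norm_eq_abs _).trans_le (single_le_sum (fun j _ => abs_nonneg (u j)) (mem_univ i))

namespace Matrix

variable {ι : Type*} [Fintype ι]

theorem abs_mulVec_le {S : Matrix ι ι ℝ} (hS : ∀ i j, 0 ≤ S i j) (v : ι → ℝ) (i : ι) :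
    |(S *ᵥ v) i| ≤ (S *ᵥ fun j => |v j|) i :=
  (abs_sum_le_sum_abs _ _).trans_eq <| sum_congr rfl fun j _ => by
    rw [abs_mul, abs_of_nonneg (hS i j)]

variable [DecidableEq ι]

section Exponential

attribute [local instance] Matrix.linftyOpNormedRing Matrix.linftyOpNormedAlgebra

theorem exp_mulVec_eq_self {M : Matrix ι ι ℝ} {v : ι → ℝ} (h : M *ᵥ v = 0) :
    exp M *ᵥ v = v := by
  have hcol : M * replicateCol ι v = 0 := by
    rw [← replicateCol_mulVec, h, replicateCol_zero]
  have hexp := exp_mul_eq_self_of_mul_eq_zero hcol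
  rw [← replicateCol_mulVec] at hexp
  funext i
  exact congrFun (congrFun hexp i) i

theorem hasSum_exp_apply (M : Matrix ι ι ℝ) (i j : ι) :
    HasSum (fun k : ℕ => (k ! : ℝ)⁻¹ * (M ^ k) i j) (exp M i j) :=
  Pi.hasSum.mp (Pi.hasSum.mp (exp_series_hasSum_exp' (𝕂 := ℝ) M) i) j

end Exponential

theorem vecMul_exp_eq_self {M : Matrix ι ι ℝ} {v : ι → ℝ} (h : v ᵥ* M = 0) :
    v ᵥ* exp M = v := by
  rw [← mulVec_transpose, ← exp_transpose]
  exact exp_mulVec_eq_self (by rwa [mulVec_transpose])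

theorem exp_add_smul_one (M : Matrix ι ι ℝ) (c : ℝ) :
    exp (M + c • 1) = Real.exp c • exp M := by
  rw [exp_add_of_commute _ _ ((Commute.one_right M).smul_right c), smul_one_eq_diagonal,
    exp_diagonal, Pi.exp_def, ← Real.exp_eq_exp_ℝ, ← smul_one_eq_diagonal, mul_smul_one]

theorem exp_smul_eq_exp_neg_smul_exp_smul_add (M : Matrix ι ι ℝ) (c t : ℝ) :
    exp (t • M) = Real.exp (-(t * c)) • exp (t • (M + c • 1)) := by
  rw [smul_add, smul_smul, exp_add_smul_one, smul_smul, ← Real.exp_add, neg_add_cancel,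
    Real.exp_zero, one_smul]

theorem exp_apply_nonneg {N : Matrix ι ι ℝ} (hN : ∀ i j, 0 ≤ N i j) (i j : ι) :
    0 ≤ exp N i j :=
  (hasSum_exp_apply N i j).nonneg fun k => mul_nonneg (by positivity) (pow_apply_nonneg hN k i j)

theorem exists_pow_apply_pos {N : Matrix ι ι ℝ} (hN : ∀ i j, 0 ≤ N i j) {i j : ι}
    (hij : Relation.ReflTransGen (fun a b => 0 < N a b) i j) : ∃ k, 0 < (N ^ k) i j := by
  induction hij with
  | refl => exact ⟨0, by simp⟩
  | @tail b c _ hbc ih =>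
    obtain ⟨k, hk⟩ := ih
    refine ⟨k + 1, ?_⟩
    rw [pow_succ, mul_apply]
    exact sum_pos' (fun l _ => mul_nonneg (pow_apply_nonneg hN k i l) (hN l c))
      ⟨b, mem_univ b, mul_pos hk hbc⟩

theorem exp_apply_pos {N : Matrix ι ι ℝ} (hN : ∀ i j, 0 ≤ N i j) {i j : ι}
    (hij : Relation.ReflTransGen (fun a b => 0 < N a b) i j) : 0 < exp N i j := by
  obtain ⟨k, hk⟩ := exists_pow_apply_pos hN hij
  calc 0 < (k ! : ℝ)⁻¹ * (N ^ k) i j := by positivity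
    _ ≤ exp N i j := le_hasSum (hasSum_exp_apply N i j) k fun l _ =>
        mul_nonneg (by positivity) (pow_apply_nonneg hN l i j)

def IsMetzler (M : Matrix ι ι ℝ) : Prop := ∀ i j, i ≠ j → 0 ≤ M i j

namespace IsMetzler

variable {M : Matrix ι ι ℝ}

theorem exists_nonneg_add_smul_one (hM : M.IsMetzler) :
    ∃ c : ℝ, 0 ≤ c ∧ ∀ i j, 0 ≤ (M + c • 1) i j := by
  refine ⟨∑ i, |M i i|, by positivity, fun i j => ?_⟩
  rcases eq_or_ne i j with rfl | hij
  · have : |M i i| ≤ ∑ i, |M i i| := single_le_sum (fun k _ => abs_nonneg (M k k)) (mem_univ i)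
    simp only [add_apply, smul_apply, one_apply_eq, smul_eq_mul, mul_one]
    linarith [neg_abs_le (M i i)]
  · simpa [one_apply_ne hij] using hM i j hij

theorem exp_smul_apply_nonneg (hM : M.IsMetzler) {t : ℝ} (ht : 0 ≤ t) (i j : ι) :
    0 ≤ exp (t • M) i j := by
  obtain ⟨c, -, hc⟩ := hM.exists_nonneg_add_smul_one
  rw [exp_smul_eq_exp_neg_smul_exp_smul_add M c, smul_apply, smul_eq_mul]
  exact mul_nonneg (Real.exp_nonneg _) (exp_apply_nonneg (fun i j => mul_nonneg ht (hc i j)) i j)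

theorem exp_smul_apply_pos (hM : M.IsMetzler) {t : ℝ} (ht : 0 < t) {i j : ι}
    (hij : Relation.ReflTransGen (fun a b => 0 < M a b) i j) : 0 < exp (t • M) i j := by
  obtain ⟨c, hc0, hc⟩ := hM.exists_nonneg_add_smul_one
  have hedge : ∀ a b, 0 < M a b → 0 < (t • (M + c • 1)) a b := fun a b hab => by
    have hshift : 0 ≤ c * (1 : Matrix ι ι ℝ) a b := mul_nonneg hc0 (zero_le_one_elem a b)
    simp only [smul_apply, add_apply, smul_eq_mul]
    exact mul_pos ht (add_pos_of_pos_of_nonneg hab hshift)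
  rw [exp_smul_eq_exp_neg_smul_exp_smul_add M c, smul_apply, smul_eq_mul]
  exact mul_pos (Real.exp_pos _)
    (exp_apply_pos (fun i j => mul_nonneg ht.le (hc i j)) (Relation.ReflTransGen.mono hedge _ _ hij))

theorem exp_smul_mem_colStochastic (hM : M.IsMetzler) (hM1 : 1 ᵥ* M = 0) {t : ℝ} (ht : 0 ≤ t) :
    exp (t • M) ∈ colStochastic ℝ ι :=
  ⟨hM.exp_smul_apply_nonneg ht, vecMul_exp_eq_self (by rw [vecMul_smul, hM1, smul_zero])⟩

end IsMetzler

theorem sum_abs_mulVec_le {S : Matrix ι ι ℝ} (hS : S ∈ colStochastic ℝ ι) (v : ι → ℝ) :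
    ∑ i, |(S *ᵥ v) i| ≤ ∑ i, |v i| :=
  (sum_le_sum fun i _ => abs_mulVec_le hS.1 v i).trans_eq (sum_mulVec_of_mem_colStochastic hS)

/- On vectors of zero sum, `S` acts as `S - ε 𝟙𝟙ᵀ`, which is nonnegative with column sums
`1 - card ι * ε`. -/
theorem sum_abs_mulVec_le_of_le_apply {S : Matrix ι ι ℝ} (hS : S ∈ colStochastic ℝ ι) {ε : ℝ}
    (hε : ∀ i j, ε ≤ S i j) {v : ι → ℝ} (hv : ∑ i, v i = 0) :
    ∑ i, |(S *ᵥ v) i| ≤ (1 - Fintype.card ι * ε) * ∑ i, |v i| := by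
  set S' : Matrix ι ι ℝ := S - of fun _ _ => ε
  have hSv : S *ᵥ v = S' *ᵥ v := by
    have hconst : (of fun _ _ => ε : Matrix ι ι ℝ) *ᵥ v = 0 := by
      funext i
      simp [mulVec, dotProduct, ← mul_sum, hv]
    rw [sub_mulVec, hconst, sub_zero]
  have hS'col : 1 ᵥ* S' = (1 - Fintype.card ι * ε) • 1 := by
    funext j
    simp [S', vecMul, dotProduct, sum_col_of_mem_colStochastic hS]
  calc ∑ i, |(S *ᵥ v) i| ≤ ∑ i, (S' *ᵥ fun j => |v j|) i :=
        hSv ▸ sum_le_sum fun i _ => abs_mulVec_le (fun i j => sub_nonneg.2 (hε i j)) v i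
    _ = (1 - Fintype.card ι * ε) * ∑ i, |v i| := by
        rw [← one_dotProduct, dotProduct_mulVec, hS'col, smul_dotProduct, one_dotProduct,
          smul_eq_mul]

theorem exists_sum_abs_mulVec_le_mul [Nonempty ι] {S : Matrix ι ι ℝ}
    (hS : S ∈ colStochastic ℝ ι) (hpos : ∀ i j, 0 < S i j) :
    ∃ q : ℝ, 0 ≤ q ∧ q < 1 ∧
      ∀ v : ι → ℝ, ∑ i, v i = 0 → ∑ i, |(S *ᵥ v) i| ≤ q * ∑ i, |v i| := by
  obtain ⟨⟨i₀, j₀⟩, hmin⟩ := Finite.exists_min fun p : ι × ι => S p.1 p.2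
  refine ⟨1 - Fintype.card ι * S i₀ j₀, ?_, ?_,
    fun v hv => sum_abs_mulVec_le_of_le_apply hS (fun i j => hmin (i, j)) hv⟩
  · have hcol : ∑ _i : ι, S i₀ j₀ ≤ ∑ i, S i j₀ := sum_le_sum fun i _ => hmin (i, j₀)
    rw [sum_col_of_mem_colStochastic hS, sum_const, card_univ, nsmul_eq_mul] at hcol
    linarith
  · have hcard : (0 : ℝ) < Fintype.card ι := by exact_mod_cast Fintype.card_pos
    exact sub_lt_self _ (mul_pos hcard (hpos i₀ j₀))

theorem tendsto_exp_smul_mulVec_nhds_zero [Nonempty ι] {M : Matrix ι ι ℝ} (hM : M.IsMetzler)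
    (hM1 : 1 ᵥ* M = 0) (hpos : ∀ i j, 0 < exp M i j) {v : ι → ℝ} (hv : ∑ i, v i = 0) :
    Tendsto (fun t : ℝ => exp (t • M) *ᵥ v) atTop (𝓝 0) := by
  set S := exp M
  have hS : S ∈ colStochastic ℝ ι := by
    simpa using hM.exp_smul_mem_colStochastic hM1 zero_le_one
  obtain ⟨q, hq0, hq1, hq⟩ := exists_sum_abs_mulVec_le_mul hS hpos
  have hpow : ∀ m : ℕ, ∑ i, |(S ^ m *ᵥ v) i| ≤ q ^ m * ∑ i, |v i| := by
    intro m
    induction m with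
    | zero => simp
    | succ m ih =>
      rw [pow_succ', ← mulVec_mulVec]
      calc _ ≤ q * ∑ i, |(S ^ m *ᵥ v) i| :=
            hq _ (by rw [sum_mulVec_of_mem_colStochastic (pow_mem hS m), hv])
        _ ≤ q * (q ^ m * ∑ i, |v i|) := by gcongr
        _ = q ^ (m + 1) * ∑ i, |v i| := by ring
  have hsplit : ∀ t : ℝ, exp (t • M) = exp ((t - ⌊t⌋₊) • M) * S ^ ⌊t⌋₊ := by
    intro t
    rw [← exp_nsmul, ← Nat.cast_smul_eq_nsmul ℝ,
      ← exp_add_of_commute _ _ (((Commute.refl M).smul_left _).smul_right _), ← add_smul,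
      sub_add_cancel]
  have hbound : ∀ᶠ t : ℝ in atTop, ‖exp (t • M) *ᵥ v‖ ≤ q ^ ⌊t⌋₊ * ∑ i, |v i| := by
    filter_upwards [eventually_ge_atTop 0] with t ht
    calc ‖exp (t • M) *ᵥ v‖ ≤ ∑ i, |(exp (t • M) *ᵥ v) i| := pi_norm_le_sum_abs _
      _ ≤ ∑ i, |(S ^ ⌊t⌋₊ *ᵥ v) i| := by
          rw [hsplit, ← mulVec_mulVec]
          exact sum_abs_mulVec_le
            (hM.exp_smul_mem_colStochastic hM1 (sub_nonneg.2 (Nat.floor_le ht))) _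
      _ ≤ q ^ ⌊t⌋₊ * ∑ i, |v i| := hpow _
  refine squeeze_zero_norm' hbound ?_
  simpa using ((tendsto_pow_atTop_nhds_zero_of_lt_one hq0 hq1).comp
    tendsto_nat_floor_atTop).mul_const (∑ i, |v i|)

theorem tendsto_exp_smul_mulVec {M : Matrix ι ι ℝ} (hM : M.IsMetzler) (hM1 : 1 ᵥ* M = 0)
    (hpos : ∀ i j, 0 < exp M i j) {ζ : ι → ℝ} (hζ : M *ᵥ ζ = 0) (hζsum : ∑ i, ζ i ≠ 0)
    (x : ι → ℝ) :
    Tendsto (fun t : ℝ => exp (t • M) *ᵥ x) atTop (𝓝 (((∑ i, x i) / ∑ i, ζ i) • ζ)) := by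
  have : Nonempty ι := univ_nonempty_iff.mp (nonempty_of_sum_ne_zero hζsum)
  set w := x - ((∑ i, x i) / ∑ i, ζ i) • ζ
  have hw : ∑ i, w i = 0 := by
    simp only [w, Pi.sub_apply, Pi.smul_apply, smul_eq_mul, sum_sub_distrib, ← mul_sum]
    exact sub_eq_zero.2 (div_mul_cancel₀ _ hζsum).symm
  have hfix : ∀ t : ℝ, exp (t • M) *ᵥ ζ = ζ := fun t =>
    exp_mulVec_eq_self (by rw [smul_mulVec, hζ, smul_zero])
  have hx : ∀ t : ℝ, exp (t • M) *ᵥ x = ((∑ i, x i) / ∑ i, ζ i) • ζ + exp (t • M) *ᵥ w := by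
    intro t
    rw [mulVec_sub, mulVec_smul, hfix]
    abel
  simpa only [hx, add_zero] using
    tendsto_const_nhds.add (tendsto_exp_smul_mulVec_nhds_zero hM hM1 hpos hw)

end Matrix

section Dmat

variable {n : ℕ} {B : Matrix (Fin n) (Fin n) ℝ}

theorem transpose_Dmat_add_apply_of_ne {i j : Fin n} (h : i ≠ j) : (Dmat B + B)ᵀ i j = B j i := by
  simp [Dmat, h.symm]

theorem isMetzler_transpose_Dmat_add (hB : ∀ i j, 0 ≤ B i j) : (Dmat B + B)ᵀ.IsMetzler :=
  fun i j h => (transpose_Dmat_add_apply_of_ne h).symm ▸ hB j i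

theorem Dmat_add_mulVec_one (hdiag : ∀ i, B i i = 0) : (Dmat B + B) *ᵥ 1 = 0 := by
  funext i
  have hrow : (B *ᵥ 1) i = ∑ j, B i j := by simp [mulVec, dotProduct]
  rw [add_mulVec, Pi.add_apply, hrow, ← add_sum_erase _ _ (mem_univ i), hdiag]
  simp [Dmat, mulVec_diagonal]

theorem StronglyConnected.reflTransGen_transpose_Dmat_add (hdiag : ∀ i, B i i = 0)
    (hconn : StronglyConnected B) (i j : Fin n) :
    Relation.ReflTransGen (fun a b => 0 < (Dmat B + B)ᵀ a b) i j := by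
  refine Relation.ReflTransGen.mono (fun a b (hba : 0 < B b a) => ?_) _ _ (hconn j i).swap
  have hab : a ≠ b := by rintro rfl; simp [hdiag] at hba
  rwa [transpose_Dmat_add_apply_of_ne hab]

end Dmat

theorem stmt3_general {n : ℕ} (B : Matrix (Fin n) (Fin n) ℝ)
    (hB : ∀ i j, 0 ≤ B i j) (hdiag : ∀ i, B i i = 0)
    (hconn : StronglyConnected B)
    (ζ : Fin n → ℝ) (hζpos : ∀ i, 0 < ζ i) (hζ : (Dmat B + B)ᵀ *ᵥ ζ = 0)
    (x : Fin n → ℝ) (hx : ∀ i, 0 ≤ x i) (hx0 : x ≠ 0) :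
    Tendsto (fun t : ℝ => (∑ i, x i)⁻¹ • (NormedSpace.exp (t • (Dmat B + B)ᵀ) *ᵥ x))
      atTop (nhds ((∑ i, ζ i)⁻¹ • ζ)) := by
  obtain ⟨i₀, hi₀⟩ := Function.ne_iff.mp hx0
  have hxsum : 0 < ∑ i, x i :=
    sum_pos' (fun i _ => hx i) ⟨i₀, mem_univ _, (hx i₀).lt_of_ne' hi₀⟩
  have hζsum : 0 < ∑ i, ζ i := sum_pos' (fun i _ => (hζpos i).le) ⟨i₀, mem_univ _, hζpos i₀⟩
  have hA := isMetzler_transpose_Dmat_add hB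
  have hA1 : 1 ᵥ* (Dmat B + B)ᵀ = 0 := by rw [vecMul_transpose, Dmat_add_mulVec_one hdiag]
  have hpos : ∀ i j, 0 < exp (Dmat B + B)ᵀ i j := fun i j => by
    simpa using hA.exp_smul_apply_pos one_pos (hconn.reflTransGen_transpose_Dmat_add hdiag i j)
  convert (tendsto_exp_smul_mulVec hA hA1 hpos hζ hζsum.ne' x).const_smul (∑ i, x i)⁻¹ using 2
  rw [smul_smul, inv_mul_eq_div, div_div_cancel_left' hxsum.ne']

/-- For every `x ∈ ℝⁿ₊`, `x ≠ 0`, the function `Y t = ⟨e,x⟩⁻¹ • exp(t(D+Bᵀ)) x` converges,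
as `t → ∞`, to `ζ / ⟨e,ζ⟩`, where `ζ` is a strictly positive eigenvector of `(D+B)ᵀ` for the
eigenvalue `0`. -/
theorem stmt3 {n : ℕ} (hn : 1 ≤ n) (B : Matrix (Fin n) (Fin n) ℝ)
    (hB : ∀ i j, 0 ≤ B i j) (hdiag : ∀ i, B i i = 0)
    (hconn : StronglyConnected B)
    (ζ : Fin n → ℝ) (hζpos : ∀ i, 0 < ζ i) (hζ : (Dmat B + B)ᵀ *ᵥ ζ = 0)
    (x : Fin n → ℝ) (hx : ∀ i, 0 ≤ x i) (hx0 : x ≠ 0) :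
    Tendsto (fun t : ℝ => (∑ i, x i)⁻¹ • (NormedSpace.exp (t • (Dmat B + B)ᵀ) *ᵥ x))
      atTop (nhds ((∑ i, ζ i)⁻¹ • ζ)) :=
  stmt3_general B hB hdiag hconn ζ hζpos hζ x hx hx0
end

section
/- Let θ* := (ρ+Γ(σ−1))/(σf), A := (θ*)^{−σ} and B := −ΓA/(Kρ). Define w(x) := A⟨e,x⟩^{1−σ}/(1−σ) + B for x ∈ ℝⁿ₊ \ {0}. Then w is continuously differentiable on ℝⁿ₊ \ {0} with ∂w/∂x_j(x) = A⟨e,x⟩^{−σ} > 0 for every j, and for every x ∈ ℝⁿ₊ \ {0}: ρ w(x) = (σ/(1−σ)) ∑_{i∈F} (∂w/∂x_i(x))^{1−1/σ} + ⟨∇w(x), (D+Bᵀ)x⟩ + Γ(1 − ⟨e,x⟩^{σ−1}/K) ⟨∇w(x), x⟩. Moreover, for each i ∈ F, the supremum over c > 0 of c^{1−σ}/(1−σ) − c·∂w/∂x_i(x) equals (σ/(1−σ))(∂w/∂x_i(x))^{1−1/σ} and is attained uniquely at c = θ*⟨e,x⟩. -/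
open Matrix Finset

/-- The continuous linear functional `y ↦ ∑ j, p j * y j` on `ℝⁿ`. -/
noncomputable def dotCLM {n : ℕ} (p : Fin n → ℝ) : (Fin n → ℝ) →L[ℝ] ℝ :=
  LinearMap.toContinuousLinearMap
    { toFun := fun y => ∑ j, p j * y j
      map_add' := fun y z => by
        simp [Pi.add_apply, mul_add, Finset.sum_add_distrib]
      map_smul' := fun a y => by
        simp only [Pi.smul_apply, smul_eq_mul, RingHom.id_apply, Finset.mul_sum]
        exact Finset.sum_congr rfl fun j _ => by ring }

/-!
The value function depends on `x` only through the total stock `s = ⟨e, x⟩`. The migration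
matrix `D + B` has zero row sums, so the transport term `⟨∇w, (D + B)ᵀ x⟩` vanishes, and the HJB
equation reduces to an identity between powers of `s`: the `s^{1-σ}` terms cancel by the choice
of `θ*`, the constant terms by the choice of `B`.

For the Hamiltonian, `c^{1-σ}/(1-σ) - c p` equals `σ/(1-σ)` times the weighted arithmetic mean
of `c^{1-σ}` and `c p` with weights `1/σ`, `1 - 1/σ`, whose geometric mean is `p^{1-1/σ}`
independently of `c`; since `σ/(1-σ) < 0`, AM-GM gives the maximum, attained exactly where
`c^{1-σ} = c p`, i.e. `c^{-σ} = p`.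
-/

section CRRAHamiltonian

variable {σ p c : ℝ}

lemma crra_hamiltonian_eq_mul_arith_mean (hσ₀ : σ ≠ 0) (hσ₁ : σ ≠ 1) :
    c ^ (1 - σ) / (1 - σ) - c * p
      = σ / (1 - σ) * (1 / σ * c ^ (1 - σ) + (1 - 1 / σ) * (c * p)) := by
  have : 1 - σ ≠ 0 := sub_ne_zero.2 hσ₁.symm
  field_simp
  ring

lemma crra_hamiltonian_geom_mean (hσ : σ ≠ 0) (hc : 0 < c) (hp : 0 < p) :
    (c ^ (1 - σ)) ^ (1 / σ) * (c * p) ^ (1 - 1 / σ) = p ^ (1 - 1 / σ) := by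
  rw [← Real.rpow_mul hc.le, Real.mul_rpow hc.le hp.le, ← mul_assoc, ← Real.rpow_add hc,
    show (1 - σ) * (1 / σ) + (1 - 1 / σ) = 0 by field_simp; ring, Real.rpow_zero, one_mul]

lemma crra_hamiltonian_le (hσ : 1 < σ) (hp : 0 < p) (hc : 0 < c) :
    c ^ (1 - σ) / (1 - σ) - c * p ≤ σ / (1 - σ) * p ^ (1 - 1 / σ) := by
  have hσ₀ : 0 < σ := zero_lt_one.trans hσ
  rw [crra_hamiltonian_eq_mul_arith_mean hσ₀.ne' hσ.ne', ← crra_hamiltonian_geom_mean hσ₀.ne' hc hp]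
  refine mul_le_mul_of_nonpos_left ?_ (div_nonpos_of_nonneg_of_nonpos hσ₀.le (by linarith))
  exact Real.geom_mean_le_arith_mean2_weighted (by positivity)
    (sub_nonneg.2 ((div_le_one hσ₀).2 hσ.le)) (by positivity) (by positivity) (by ring)

lemma crra_hamiltonian_eq_iff (hσ : 1 < σ) (hp : 0 < p) (hc : 0 < c) :
    c ^ (1 - σ) / (1 - σ) - c * p = σ / (1 - σ) * p ^ (1 - 1 / σ) ↔ c ^ (-σ) = p := by
  have hσ₀ : 0 < σ := zero_lt_one.trans hσ
  rw [crra_hamiltonian_eq_mul_arith_mean hσ₀.ne' hσ.ne', ← crra_hamiltonian_geom_mean hσ₀.ne' hc hp,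
    mul_right_inj' (div_ne_zero hσ₀.ne' (by linarith)), eq_comm,
    Real.geom_mean_eq_arith_mean2_weighted_iff_of_pos (by positivity)
      (sub_pos.2 ((div_lt_one hσ₀).2 hσ)) (by positivity) (by positivity) (by ring),
    sub_eq_neg_add, Real.rpow_add hc, Real.rpow_one, mul_comm c, mul_left_inj' hc.ne']

lemma isGreatest_crra_hamiltonian {c₀ : ℝ} (hσ : 1 < σ) (hc₀ : 0 < c₀) :
    IsGreatest ((fun c => c ^ (1 - σ) / (1 - σ) - c * c₀ ^ (-σ)) '' Set.Ioi 0)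
        (σ / (1 - σ) * (c₀ ^ (-σ)) ^ (1 - 1 / σ)) ∧
      ∀ c : ℝ, 0 < c →
        c ^ (1 - σ) / (1 - σ) - c * c₀ ^ (-σ) = σ / (1 - σ) * (c₀ ^ (-σ)) ^ (1 - 1 / σ) →
        c = c₀ := by
  have hp : 0 < c₀ ^ (-σ) := Real.rpow_pos_of_pos hc₀ _
  refine ⟨⟨⟨c₀, hc₀, (crra_hamiltonian_eq_iff hσ hp hc₀).2 rfl⟩, ?_⟩, fun c hc h => ?_⟩
  · rintro _ ⟨c, hc, rfl⟩
    exact crra_hamiltonian_le hσ hp hc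
  · exact Real.rpow_left_injOn (by linarith) hc.le hc₀.le ((crra_hamiltonian_eq_iff hσ hp hc).1 h)

end CRRAHamiltonian

lemma hasDerivAt_rpow_one_sub_div {σ s : ℝ} (hσ : σ ≠ 1) (hs : s ≠ 0) :
    HasDerivAt (fun t => t ^ (1 - σ) / (1 - σ)) (s ^ (-σ)) s := by
  refine ((Real.hasDerivAt_rpow_const (p := 1 - σ) (Or.inl hs)).div_const (1 - σ)).congr_deriv ?_
  rw [sub_sub_cancel_left, mul_div_cancel_left₀ _ (sub_ne_zero.2 hσ.symm)]

lemma dotCLM_const {n : ℕ} (a : ℝ) : dotCLM (fun _ : Fin n => a) = a • dotCLM fun _ => 1 := by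
  ext y
  simp [dotCLM, Finset.mul_sum]

lemma HasDerivAt.hasFDerivAt_comp_sum {n : ℕ} {g : ℝ → ℝ} {g' : ℝ} {x : Fin n → ℝ}
    (hg : HasDerivAt g g' (∑ j, x j)) :
    HasFDerivAt (fun y => g (∑ j, y j)) (dotCLM fun _ => g') x := by
  rw [dotCLM_const]
  exact hg.comp_hasFDerivAt (f := fun y : Fin n → ℝ => ∑ j, y j) x
    (by simpa [dotCLM] using (dotCLM fun _ : Fin n => (1 : ℝ)).hasFDerivAt (x := x))

lemma Dmat_add_self_mulVec_one {n : ℕ} {B : Matrix (Fin n) (Fin n) ℝ} (hdiag : ∀ i, B i i = 0) :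
    (Dmat B + B) *ᵥ 1 = 0 := by
  ext i
  rw [add_mulVec, Pi.add_apply, Dmat, mulVec_diagonal, Pi.one_apply, mul_one, mulVec, dotProduct,
    ← sum_erase_add _ _ (mem_univ i)]
  simp [hdiag]

lemma sum_transpose_mulVec_eq_zero {ι R : Type*} [Fintype ι] [CommSemiring R]
    {M : Matrix ι ι R} (hM : M *ᵥ 1 = 0) (x : ι → R) : ∑ j, (Mᵀ *ᵥ x) j = 0 := by
  rw [← dotProduct_one, mulVec_transpose, ← dotProduct_mulVec, hM, dotProduct_zero]

lemma planner_hjb_identity {σ Γ K ρ f θ s : ℝ} (hσ₀ : σ ≠ 0) (hσ₁ : σ ≠ 1) (hρ : ρ ≠ 0)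
    (hθ : 0 < θ) (hs : 0 < s) (hθf : σ * f * θ = ρ + Γ * (σ - 1)) :
    ρ * (θ ^ (-σ) * s ^ (1 - σ) / (1 - σ) + -(Γ * θ ^ (-σ)) / (K * ρ))
      = σ / (1 - σ) * (f * (θ ^ (-σ) * s ^ (-σ)) ^ (1 - 1 / σ))
        + Γ * (1 - s ^ (σ - 1) / K) * (θ ^ (-σ) * s ^ (-σ) * s) := by
  have hpow : (θ ^ (-σ) * s ^ (-σ)) ^ (1 - 1 / σ) = θ * θ ^ (-σ) * s ^ (1 - σ) := by
    rw [← Real.mul_rpow hθ.le hs.le, ← Real.rpow_mul (by positivity),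
      show -σ * (1 - 1 / σ) = 1 - σ by field_simp; ring, Real.mul_rpow hθ.le hs.le,
      sub_eq_add_neg, Real.rpow_add hθ, Real.rpow_one]
  have hps : s ^ (-σ) * s = s ^ (1 - σ) := by
    rw [sub_eq_neg_add, Real.rpow_add hs, Real.rpow_one]
  have hq : s ^ (σ - 1) * s ^ (1 - σ) = 1 := by
    rw [← Real.rpow_add hs, sub_add_sub_cancel', sub_self, Real.rpow_zero]
  have hσinv : (1 - σ) * (1 - σ)⁻¹ = 1 := mul_inv_cancel₀ (sub_ne_zero.2 hσ₁.symm)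
  rw [hpow, mul_assoc _ (s ^ (-σ)), hps]
  linear_combination (-(θ ^ (-σ) * s ^ (1 - σ) / (1 - σ))) * hθf
    + (Γ * θ ^ (-σ) / K) * hq + (Γ * θ ^ (-σ) * s ^ (1 - σ)) * hσinv
    - (Γ * θ ^ (-σ) / K) * mul_inv_cancel₀ hρ

theorem stmt15_general {n : ℕ} (B : Matrix (Fin n) (Fin n) ℝ)
    (hdiag : ∀ i, B i i = 0)
    (F : Finset (Fin n)) (hF : F.Nonempty)
    (σ Γ K ρ : ℝ) (hσ : 1 < σ) (hΓ : 0 < Γ) (hρ : 0 < ρ)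
    (θstar A Bc : ℝ)
    (hθstar : θstar = (ρ + Γ * (σ - 1)) / (σ * F.card))
    (hA : A = θstar ^ (-σ)) (hBc : Bc = -(Γ * A) / (K * ρ))
    (w : (Fin n → ℝ) → ℝ)
    (hw : ∀ x : Fin n → ℝ, w x = A * (∑ j, x j) ^ (1 - σ) / (1 - σ) + Bc) :
    ∀ x : Fin n → ℝ, (∀ j, 0 ≤ x j) → x ≠ 0 →
      (0 < A * (∑ j, x j) ^ (-σ)) ∧
      HasFDerivAt w (dotCLM fun _ => A * (∑ j, x j) ^ (-σ)) x ∧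
      (ρ * w x = (σ / (1 - σ)) * (∑ _i ∈ F, (A * (∑ j, x j) ^ (-σ)) ^ (1 - 1 / σ))
        + (∑ j, (A * (∑ j, x j) ^ (-σ)) * (((Dmat B + B)ᵀ *ᵥ x) j))
        + Γ * (1 - (∑ j, x j) ^ (σ - 1) / K) * (∑ j, (A * (∑ j, x j) ^ (-σ)) * x j)) ∧
      (∀ i ∈ F,
        IsGreatest ((fun c => c ^ (1 - σ) / (1 - σ) - c * (A * (∑ j, x j) ^ (-σ))) ''
            Set.Ioi (0 : ℝ))
          ((σ / (1 - σ)) * (A * (∑ j, x j) ^ (-σ)) ^ (1 - 1 / σ)) ∧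
        ∀ c : ℝ, 0 < c →
          c ^ (1 - σ) / (1 - σ) - c * (A * (∑ j, x j) ^ (-σ))
            = (σ / (1 - σ)) * (A * (∑ j, x j) ^ (-σ)) ^ (1 - 1 / σ) →
          c = θstar * (∑ j, x j)) := by
  intro x hx hx0
  set s := ∑ j, x j
  have hs : 0 < s := Fintype.sum_pos (lt_of_le_of_ne (fun j => hx j) (Ne.symm hx0))
  have hf : (0 : ℝ) < F.card := by exact_mod_cast hF.card_pos
  have hθ : 0 < θstar := by
    rw [hθstar]
    have : 0 < ρ + Γ * (σ - 1) := by nlinarith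
    positivity
  have hθf : σ * F.card * θstar = ρ + Γ * (σ - 1) := by
    rw [hθstar]
    field_simp
  have hp : A * s ^ (-σ) = (θstar * s) ^ (-σ) := by rw [hA, Real.mul_rpow hθ.le hs.le]
  refine ⟨hp ▸ by positivity, ?_, ?_,
    fun _ _ => hp ▸ isGreatest_crra_hamiltonian hσ (by positivity)⟩
  · rw [show w = fun y => A * ((∑ j, y j) ^ (1 - σ) / (1 - σ)) + Bc from
      funext fun y => (hw y).trans (by ring)]
    exact ((hasDerivAt_rpow_one_sub_div hσ.ne' hs.ne').const_mul A |>.add_const Bc)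
      |>.hasFDerivAt_comp_sum
  · rw [hw, ← mul_sum, ← mul_sum, sum_transpose_mulVec_eq_zero (Dmat_add_self_mulVec_one hdiag),
      sum_const, nsmul_eq_mul, mul_zero, add_zero, hBc, hA]
    exact planner_hjb_identity (by positivity) hσ.ne' hρ.ne' hθ hs hθf

/-- Verification of the social planner's HJB equation in the logistic framework (S1)(U1):
with `θ* = (ρ+Γ(σ−1))/(σf)`, `A = (θ*)^{−σ}`, `B = −ΓA/(Kρ)`, the function
`w(x) = A⟨e,x⟩^{1−σ}/(1−σ) + B` is differentiable on `ℝⁿ₊ \ {0}` with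
`∂w/∂x_j(x) = A⟨e,x⟩^{−σ} > 0`, satisfies the planner's HJB equation, and for each `i ∈ F`
the Hamiltonian supremum is attained uniquely at `c = θ*⟨e,x⟩`. -/
theorem stmt15 {n : ℕ} (B : Matrix (Fin n) (Fin n) ℝ)
    (hB : ∀ i j, 0 ≤ B i j) (hdiag : ∀ i, B i i = 0)
    (F : Finset (Fin n)) (hF : F.Nonempty)
    (σ Γ K ρ : ℝ) (hσ : 1 < σ) (hΓ : 0 < Γ) (hK : 0 < K) (hρ : 0 < ρ)
    (θstar A Bc : ℝ)
    (hθstar : θstar = (ρ + Γ * (σ - 1)) / (σ * F.card))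
    (hA : A = θstar ^ (-σ)) (hBc : Bc = -(Γ * A) / (K * ρ))
    (w : (Fin n → ℝ) → ℝ)
    (hw : ∀ x : Fin n → ℝ, w x = A * (∑ j, x j) ^ (1 - σ) / (1 - σ) + Bc) :
    ∀ x : Fin n → ℝ, (∀ j, 0 ≤ x j) → x ≠ 0 →
      (0 < A * (∑ j, x j) ^ (-σ)) ∧
      HasFDerivAt w (dotCLM fun _ => A * (∑ j, x j) ^ (-σ)) x ∧
      (ρ * w x = (σ / (1 - σ)) * (∑ _i ∈ F, (A * (∑ j, x j) ^ (-σ)) ^ (1 - 1 / σ))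
        + (∑ j, (A * (∑ j, x j) ^ (-σ)) * (((Dmat B + B)ᵀ *ᵥ x) j))
        + Γ * (1 - (∑ j, x j) ^ (σ - 1) / K) * (∑ j, (A * (∑ j, x j) ^ (-σ)) * x j)) ∧
      (∀ i ∈ F,
        IsGreatest ((fun c => c ^ (1 - σ) / (1 - σ) - c * (A * (∑ j, x j) ^ (-σ))) ''
            Set.Ioi (0 : ℝ))
          ((σ / (1 - σ)) * (A * (∑ j, x j) ^ (-σ)) ^ (1 - 1 / σ)) ∧
        ∀ c : ℝ, 0 < c →
          c ^ (1 - σ) / (1 - σ) - c * (A * (∑ j, x j) ^ (-σ))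
            = (σ / (1 - σ)) * (A * (∑ j, x j) ^ (-σ)) ^ (1 - 1 / σ) →
          c = θstar * (∑ j, x j)) :=
  stmt15_general B hdiag F hF σ Γ K ρ hσ hΓ hρ θstar A Bc hθstar hA hBc w hw
end
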